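/- Let n ≥ 1, let H be a 2^n-dimensional complex matrix, let K be a local unitary with K * H * Kᴴ = -H (so exp(-itH) is type-I locally invertible), and let K₀ be any local unitary. Then for every t : ℝ the coset propagator U := K₀ * exp(-(Complex.I * t) • H) is pointwise invertible by the pair of local unitaries K₁ := K * K₀ᴴ and K₂ := Kᴴ * K₀ᴴ, namely K₁ * U * K₂ = exp((Complex.I * t) • H) * K₀ᴴ = U⁻¹. (Elements of the cosets K₀·{exp(-itH)} of a type-I invertible one-parameter group are type-II locally invertible.) -/

import Mathlib

open Matrix

/-- A `2^n`-dimensional matrix (indexed by configurations `Fin n → Fin 2`) is a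
local unitary if it is the `n`-fold Kronecker product of unitary 2×2 matrices. -/
def IsLocalUnitary {n : ℕ} (K : Matrix (Fin n → Fin 2) (Fin n → Fin 2) ℂ) : Prop :=
  ∃ u : Fin n → Matrix (Fin 2) (Fin 2) ℂ,
    (∀ ℓ, (u ℓ)ᴴ * u ℓ = 1) ∧ ∀ f g, K f g = ∏ ℓ, u ℓ (f ℓ) (g ℓ)

/-- The Pauli-z operator acting on qubit `ℓ`. -/
def Zop {n : ℕ} (ℓ : Fin n) : Matrix (Fin n → Fin 2) (Fin n → Fin 2) ℂ :=
  fun f g => if f = g then (-1 : ℂ) ^ ((f ℓ : ℕ)) else 0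

/-- The Pauli-x operator acting on qubit `ℓ`. -/
def Xop {n : ℕ} (ℓ : Fin n) : Matrix (Fin n → Fin 2) (Fin n → Fin 2) ℂ :=
  fun f g => if f ℓ ≠ g ℓ ∧ ∀ m, m ≠ ℓ → f m = g m then 1 else 0

/-- The Pauli-y operator acting on qubit `ℓ`. -/
def Yop {n : ℕ} (ℓ : Fin n) : Matrix (Fin n → Fin 2) (Fin n → Fin 2) ℂ :=
  fun f g => if f ℓ ≠ g ℓ ∧ ∀ m, m ≠ ℓ → f m = g m then
    Complex.I * (-1 : ℂ) ^ ((f ℓ : ℕ) + 1) else 0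

/-
Conjugation by `K` maps `H` to `-H`, hence maps `exp (-itH)` to `exp (itH)`, the inverse of
`exp (-itH)`. Local unitaries are unitary (a Kronecker product of unitaries is unitary), so the
`K₀` factors cancel in `K₁ U K₂ = K K₀ᴴ K₀ exp (-itH) Kᴴ K₀ᴴ = exp (itH) K₀ᴴ = U⁻¹`.
-/

namespace Matrix

section PiKronecker

variable {ι m R : Type*} [Fintype ι]

def piKronecker [CommMonoid R] (A : ι → Matrix m m R) : Matrix (ι → m) (ι → m) R :=
  of fun f g => ∏ ℓ, A ℓ (f ℓ) (g ℓ)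

theorem piKronecker_apply [CommMonoid R] (A : ι → Matrix m m R) (f g : ι → m) :
    piKronecker A f g = ∏ ℓ, A ℓ (f ℓ) (g ℓ) :=
  rfl

theorem piKronecker_mul [Fintype m] [DecidableEq ι] [CommSemiring R] (A B : ι → Matrix m m R) :
    piKronecker A * piKronecker B = piKronecker (A * B) := by
  ext f g
  simp only [mul_apply, piKronecker_apply, Pi.mul_apply, ← Finset.prod_mul_distrib]
  exact (Fintype.prod_sum fun ℓ j => A ℓ (f ℓ) j * B ℓ j (g ℓ)).symm

theorem piKronecker_one [DecidableEq ι] [DecidableEq m] [CommSemiring R] :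
    piKronecker (fun _ : ι => (1 : Matrix m m R)) = 1 := by
  ext f g
  simp only [piKronecker_apply, one_apply, Finset.prod_ite_zero, Finset.prod_const_one,
    Finset.mem_univ, true_implies, funext_iff]

theorem conjTranspose_piKronecker [CommSemiring R] [StarRing R] (A : ι → Matrix m m R) :
    (piKronecker A)ᴴ = piKronecker fun ℓ => (A ℓ)ᴴ := by
  ext f g
  simp only [conjTranspose_apply, piKronecker_apply, star_prod]

end PiKronecker

section Exp

open NormedSpace

variable {m 𝔸 : Type*} [Fintype m] [DecidableEq m]
  [NormedCommRing 𝔸] [NormedAlgebra ℚ 𝔸] [CompleteSpace 𝔸]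

theorem exp_unitary_conj [StarRing 𝔸] {K : Matrix m m 𝔸} (hK : Kᴴ * K = 1) (A : Matrix m m 𝔸) :
    exp (K * A * Kᴴ) = K * exp A * Kᴴ := by
  rw [← inv_eq_left_inv hK]
  exact exp_conj K A ⟨⟨K, Kᴴ, mul_eq_one_comm.mp hK, hK⟩, rfl⟩

theorem inv_exp_neg (A : Matrix m m 𝔸) : (exp (-A))⁻¹ = exp A := by
  rw [← exp_neg, neg_neg]

theorem exp_smul_conj_of_conj_eq_neg [StarRing 𝔸] {H K : Matrix m m 𝔸} (hK : Kᴴ * K = 1)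
    (hKH : K * H * Kᴴ = -H) (c : 𝔸) : K * exp (c • H) * Kᴴ = exp (-c • H) := by
  rw [← exp_unitary_conj hK, Matrix.mul_smul, Matrix.smul_mul, hKH, smul_neg, neg_smul]

end Exp

end Matrix

theorem IsLocalUnitary.conjTranspose_mul_self {n : ℕ}
    {K : Matrix (Fin n → Fin 2) (Fin n → Fin 2) ℂ} (hK : IsLocalUnitary K) : Kᴴ * K = 1 := by
  obtain ⟨u, hu, hKu⟩ := hK
  rw [show K = piKronecker u from ext hKu, conjTranspose_piKronecker, piKronecker_mul]
  exact (congrArg piKronecker (funext hu)).trans piKronecker_one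

theorem stmt17 (n : ℕ)
    (H K K₀ : Matrix (Fin n → Fin 2) (Fin n → Fin 2) ℂ)
    (hK : IsLocalUnitary K) (hK₀ : IsLocalUnitary K₀)
    (hinv : K * H * Kᴴ = -H) (t : ℝ) :
    (K * K₀ᴴ) * (K₀ * NormedSpace.exp (-(Complex.I * (t : ℂ)) • H)) * (Kᴴ * K₀ᴴ) =
        NormedSpace.exp ((Complex.I * (t : ℂ)) • H) * K₀ᴴ ∧
      NormedSpace.exp ((Complex.I * (t : ℂ)) • H) * K₀ᴴ =
        (K₀ * NormedSpace.exp (-(Complex.I * (t : ℂ)) • H))⁻¹ := by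
  have hK₀u := hK₀.conjTranspose_mul_self
  constructor
  · calc (K * K₀ᴴ) * (K₀ * NormedSpace.exp (-(Complex.I * t) • H)) * (Kᴴ * K₀ᴴ)
        = K * (K₀ᴴ * K₀) * NormedSpace.exp (-(Complex.I * t) • H) * Kᴴ * K₀ᴴ := by
          simp only [Matrix.mul_assoc]
      _ = NormedSpace.exp ((Complex.I * t) • H) * K₀ᴴ := by
          rw [hK₀u, Matrix.mul_one,
            exp_smul_conj_of_conj_eq_neg hK.conjTranspose_mul_self hinv, neg_neg]
  · rw [Matrix.mul_inv_rev, inv_eq_left_inv hK₀u, neg_smul, inv_exp_neg]
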